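/- arXiv:math/0608152 — 3 statements merged into one kernel-verified Lean document; each statement's English description precedes it below -/
import Mathlib

section
/- Let n ≥ 1, and let g_1,…,g_n be real constants. Define Q : ℝ^{n+1} × ℝ^n → ℝ by Q(x,y) = exp( Σ_{i=1}^{n} ( e^{y_i − x_i} + g_i e^{x_{i+1} − y_i} ) ). Then for all x ∈ ℝ^{n+1}, y ∈ ℝ^n one has the pointwise identity −(1/2) Σ_{i=1}^{n+1} ∂²Q/∂x_i²(x,y) + ( Σ_{i=1}^{n} g_i e^{x_{i+1} − x_i} ) Q(x,y) = −(1/2) Σ_{i=1}^{n} ∂²Q/∂y_i²(x,y) + ( Σ_{i=1}^{n−1} g_i e^{y_{i+1} − y_i} ) Q(x,y). In other words, the kernel Q intertwines the quadratic Hamiltonians of the gl_{n+1} and gl_n open Toda chains. -/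
/-!
Write `Q = exp S` with `S = ∑ i, (a i + b i)`, `a i = exp (y i - x i)` and
`b i = g i * exp (x (i+1) - y i)`. In each single variable `S` has the form
`c + p * exp t + r * exp (-t)`, so `∂² Q = Q * ((∂S)² + ∂²S)`. In `y i` one gets `∂S = a i - b i`,
in `x j` one gets `∂S = b (j-1) - a j` (with `b (-1) = a (m+1) = 0`), and in both cases `∂²S` is
the corresponding sum. After summation the `∂²S` terms and the squares `(a i)²`, `(b i)²` agree
on both sides; what remains are the cross terms `a i * b i = g i * exp (x (i+1) - x i)` and
`b i * a (i+1) = g i * exp (y (i+1) - y i)`, which are exactly the two Toda potentials.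
-/

open Real

/-- Second partial derivative of `f` in the `i`-th coordinate at `x`. -/
noncomputable def pd2 {k : ℕ} (f : (Fin k → ℝ) → ℝ) (i : Fin k) (x : Fin k → ℝ) : ℝ :=
  deriv (deriv (fun t : ℝ => f (Function.update x i t))) (x i)

/-- The Givental recursive kernel intertwining the `gl_{n+1}` and `gl_n`
open Toda chains (here `n = m + 1 ≥ 1`):
`Q(x,y) = exp( Σ_{i=1}^{n} ( e^{y_i − x_i} + g_i e^{x_{i+1} − y_i} ) )`. -/
noncomputable def Qker (m : ℕ) (g : Fin (m + 1) → ℝ)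
    (x : Fin (m + 2) → ℝ) (y : Fin (m + 1) → ℝ) : ℝ :=
  Real.exp (∑ i : Fin (m + 1),
    (Real.exp (y i - x i.castSucc) + g i * Real.exp (x i.succ - y i)))

open Finset

lemma deriv_deriv_exp_comp {φ φ' φ'' : ℝ → ℝ} (hφ : ∀ t, HasDerivAt φ (φ' t) t) {s : ℝ}
    (hφ' : HasDerivAt φ' (φ'' s) s) :
    deriv (deriv fun t => exp (φ t)) s = exp (φ s) * (φ' s ^ 2 + φ'' s) := by
  have hderiv : deriv (fun t => exp (φ t)) = fun t => exp (φ t) * φ' t :=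
    funext fun t => (hφ t).exp.deriv
  rw [hderiv]
  exact ((hφ s).exp.mul hφ').deriv.trans (by ring)

lemma pd2_exp_sum_apply {k : ℕ} {φ φ' φ'' : Fin k → ℝ → ℝ}
    (hφ : ∀ i t, HasDerivAt (φ i) (φ' i t) t) (hφ' : ∀ i t, HasDerivAt (φ' i) (φ'' i t) t)
    (x : Fin k → ℝ) (j : Fin k) :
    pd2 (fun u => exp (∑ i, φ i (u i))) j x
      = exp (∑ i, φ i (x i)) * (φ' j (x j) ^ 2 + φ'' j (x j)) := by
  set c := ∑ i ∈ univ \ {j}, φ i (x i)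
  have hsplit : ∀ t, ∑ i, φ i (Function.update x j t i) = φ j t + c := fun t => by
    simp only [Function.apply_update (fun i => φ i), sum_update_of_mem (mem_univ j)]
    rfl
  have h := deriv_deriv_exp_comp (φ := fun t => φ j t + c) (fun t => (hφ j t).add_const c)
    (hφ' j (x j))
  have hx := hsplit (x j)
  rw [Function.update_eq_self] at hx
  simp only [pd2, hsplit, h, hx]

lemma pd2_exp_sum_exp_add_exp_neg {k : ℕ} (p r : Fin k → ℝ) (x : Fin k → ℝ) (j : Fin k) :
    pd2 (fun u => exp (∑ i, (p i * exp (u i) + r i * exp (-u i)))) j x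
      = exp (∑ i, (p i * exp (x i) + r i * exp (-x i)))
        * ((p j * exp (x j) - r j * exp (-x j)) ^ 2 + (p j * exp (x j) + r j * exp (-x j))) := by
  have hexp_neg : ∀ t, HasDerivAt (fun t => exp (-t)) (-exp (-t)) t := fun t =>
    (hasDerivAt_neg t).exp.congr_deriv (by ring)
  have hφ : ∀ (p r t : ℝ), HasDerivAt (fun t => p * exp t + r * exp (-t))
      (p * exp t - r * exp (-t)) t := fun p r t =>
    (((hasDerivAt_exp t).const_mul p).add ((hexp_neg t).const_mul r)).congr_deriv (by ring)
  have hφ' : ∀ (p r t : ℝ), HasDerivAt (fun t => p * exp t - r * exp (-t))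
      (p * exp t + r * exp (-t)) t := fun p r t =>
    (((hasDerivAt_exp t).const_mul p).sub ((hexp_neg t).const_mul r)).congr_deriv (by ring)
  exact pd2_exp_sum_apply (fun i => hφ (p i) (r i)) (fun i => hφ' (p i) (r i)) x j

lemma sum_cons_zero_mul_snoc_zero {n : ℕ} (a b : Fin (n + 1) → ℝ) :
    ∑ j, (Fin.cons 0 b : Fin (n + 2) → ℝ) j * (Fin.snoc a 0 : Fin (n + 2) → ℝ) j
      = ∑ i : Fin n, b i.castSucc * a i.succ := by
  rw [Fin.sum_univ_succ, Fin.sum_univ_castSucc]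
  simp only [Fin.cons_zero, Fin.cons_succ, zero_mul, zero_add]
  simp only [Fin.succ_castSucc, Fin.succ_last, Fin.snoc_castSucc, Fin.snoc_last, mul_zero, add_zero]

lemma sum_sq_cons_zero_sub_snoc_zero {n : ℕ} (a b : Fin (n + 1) → ℝ) :
    ∑ j, (((Fin.cons 0 b : Fin (n + 2) → ℝ) j - (Fin.snoc a 0 : Fin (n + 2) → ℝ) j) ^ 2
        + ((Fin.cons 0 b : Fin (n + 2) → ℝ) j + (Fin.snoc a 0 : Fin (n + 2) → ℝ) j))
      = ∑ i, ((a i - b i) ^ 2 + (a i + b i))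
        + 2 * (∑ i, a i * b i - ∑ i : Fin n, b i.castSucc * a i.succ) := by
  have hexpand : ∀ {k : ℕ} (u v : Fin k → ℝ), ∑ i, ((u i - v i) ^ 2 + (u i + v i))
      = ∑ i, (u i ^ 2 + u i) + ∑ i, (v i ^ 2 + v i) - 2 * ∑ i, u i * v i := fun u v => by
    simp only [← sum_add_distrib, mul_sum, ← sum_sub_distrib]
    exact sum_congr rfl fun _ _ => by ring
  have hb : ∑ j, ((Fin.cons 0 b : Fin (n + 2) → ℝ) j ^ 2 + (Fin.cons 0 b : Fin (n + 2) → ℝ) j)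
      = ∑ i, (b i ^ 2 + b i) := by simp [Fin.sum_univ_succ]
  have ha : ∑ j, ((Fin.snoc a 0 : Fin (n + 2) → ℝ) j ^ 2 + (Fin.snoc a 0 : Fin (n + 2) → ℝ) j)
      = ∑ i, (a i ^ 2 + a i) := by simp [Fin.sum_univ_castSucc]
  rw [hexpand, hexpand, hb, ha, sum_cons_zero_mul_snoc_zero]
  ring

lemma Qker_eq_exp_sum_left (m : ℕ) (g : Fin (m + 1) → ℝ) (x : Fin (m + 2) → ℝ)
    (y : Fin (m + 1) → ℝ) :
    Qker m g x y = exp (∑ j, ((Fin.cons 0 fun i => g i * exp (-y i) : Fin (m + 2) → ℝ) j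
      * exp (x j) + (Fin.snoc (fun i => exp (y i)) 0 : Fin (m + 2) → ℝ) j * exp (-x j))) := by
  rw [Qker, sum_add_distrib, sum_add_distrib, add_comm (∑ i, exp _)]
  congr 2
  · simp only [Fin.sum_univ_succ (n := m + 1), Fin.cons_zero, Fin.cons_succ, zero_mul, zero_add,
      sub_eq_add_neg, exp_add, mul_assoc, mul_comm (exp (-y _))]
  · simp only [Fin.sum_univ_castSucc (n := m + 1), Fin.snoc_castSucc, Fin.snoc_last, zero_mul,
      add_zero, sub_eq_add_neg, exp_add]

lemma Qker_eq_exp_sum_right (m : ℕ) (g : Fin (m + 1) → ℝ) (x : Fin (m + 2) → ℝ)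
    (y : Fin (m + 1) → ℝ) :
    Qker m g x y
      = exp (∑ i, (exp (-x i.castSucc) * exp (y i) + g i * exp (x i.succ) * exp (-y i))) := by
  simp only [Qker, sub_eq_add_neg, exp_add, mul_assoc, mul_comm (exp (-x _))]

-- `b j`, `a j` are the terms of the phase containing `x j`; at the two ends of the chain one of
-- them is absent, which `Fin.cons 0` and `Fin.snoc · 0` encode.
lemma pd2_Qker_left (m : ℕ) (g : Fin (m + 1) → ℝ) (x : Fin (m + 2) → ℝ) (y : Fin (m + 1) → ℝ)
    (j : Fin (m + 2)) :
    let b : Fin (m + 2) → ℝ := Fin.cons 0 fun i => g i * exp (x i.succ - y i)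
    let a : Fin (m + 2) → ℝ := Fin.snoc (fun i => exp (y i - x i.castSucc)) 0
    pd2 (fun u => Qker m g u y) j x = Qker m g x y * ((b j - a j) ^ 2 + (b j + a j)) := by
  intro b a
  have hb : (Fin.cons 0 fun i => g i * exp (-y i) : Fin (m + 2) → ℝ) j * exp (x j) = b j := by
    cases j using Fin.cases <;> simp [b, sub_eq_add_neg, exp_add, mul_assoc, mul_comm (exp (-y _))]
  have ha : (Fin.snoc (fun i => exp (y i)) 0 : Fin (m + 2) → ℝ) j * exp (-x j) = a j := by
    cases j using Fin.lastCases <;> simp [a, sub_eq_add_neg, exp_add]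
  rw [funext fun u => Qker_eq_exp_sum_left m g u y, pd2_exp_sum_exp_add_exp_neg,
    ← Qker_eq_exp_sum_left, hb, ha]

lemma pd2_Qker_right (m : ℕ) (g : Fin (m + 1) → ℝ) (x : Fin (m + 2) → ℝ) (y : Fin (m + 1) → ℝ)
    (i : Fin (m + 1)) :
    let a := exp (y i - x i.castSucc)
    let b := g i * exp (x i.succ - y i)
    pd2 (fun v => Qker m g x v) i y = Qker m g x y * ((a - b) ^ 2 + (a + b)) := by
  intro a b
  have ha : exp (-x i.castSucc) * exp (y i) = a := by rw [← exp_add, neg_add_eq_sub]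
  have hb : g i * exp (x i.succ) * exp (-y i) = b := by rw [mul_assoc, ← exp_add, ← sub_eq_add_neg]
  rw [funext fun v => Qker_eq_exp_sum_right m g x v, pd2_exp_sum_exp_add_exp_neg, ha, hb]

/-- The kernel `Q` intertwines the quadratic Hamiltonians of the `gl_{n+1}`
and `gl_n` open Toda chains, `n = m + 1 ≥ 1`. -/
theorem gl_open_toda_intertwining (m : ℕ) (g : Fin (m + 1) → ℝ)
    (x : Fin (m + 2) → ℝ) (y : Fin (m + 1) → ℝ) :
    -(1/2) * (∑ i : Fin (m + 2), pd2 (fun u => Qker m g u y) i x)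
      + (∑ i : Fin (m + 1), g i * Real.exp (x i.succ - x i.castSucc)) * Qker m g x y
    = -(1/2) * (∑ i : Fin (m + 1), pd2 (fun v => Qker m g x v) i y)
      + (∑ i : Fin m, g i.castSucc * Real.exp (y i.succ - y i.castSucc)) * Qker m g x y := by
  set a : Fin (m + 1) → ℝ := fun i => exp (y i - x i.castSucc)
  set b : Fin (m + 1) → ℝ := fun i => g i * exp (x i.succ - y i)
  have hx : ∀ i, g i * exp (x i.succ - x i.castSucc) = a i * b i := fun i => by
    rw [mul_left_comm, ← exp_add, sub_add_sub_cancel']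
  have hy : ∀ i : Fin m, g i.castSucc * exp (y i.succ - y i.castSucc) = b i.castSucc * a i.succ :=
    fun i => by rw [mul_assoc, ← exp_add, Fin.succ_castSucc, sub_add_sub_cancel']
  simp only [pd2_Qker_left, pd2_Qker_right, ← mul_sum, sum_sq_cons_zero_sub_snoc_zero, hx, hy]
  ring
end

section
/- Let g : ℤ → ℝ with g_i ≥ 0 for all i, and let x, y : ℤ → ℝ. Assume that the following families indexed by i ∈ ℤ are summable: (e^{x_i − y_i}), (g_i e^{y_{i+1} − x_i}), (g_i e^{x_{i+1} − x_i}), (g_i e^{y_{i+1} − y_i}), (e^{2(x_i − y_i)}), and (g_i² e^{2(y_{i+1} − x_i)}). Then Σ_{i∈ℤ} [ ( e^{x_i − y_i} − g_i e^{y_{i+1} − x_i} )² + e^{x_i − y_i} + g_i e^{y_{i+1} − x_i} ] − 2 Σ_{i∈ℤ} g_i e^{x_{i+1} − x_i} = Σ_{i∈ℤ} [ ( e^{x_i − y_i} − g_{i−1} e^{y_i − x_{i−1}} )² + e^{x_i − y_i} + g_{i−1} e^{y_i − x_{i−1}} ] − 2 Σ_{i∈ℤ} g_i e^{y_{i+1}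 − y_i} (all sums are tsums over ℤ). This identity expresses that the Baxter kernel Q(x,y) = exp( Σ_{i∈ℤ} ( e^{x_i − y_i} + g_i e^{y_{i+1} − x_i} ) ) of the A_∞ Toda chain satisfies H(x)Q = H(y)Q, where H is the A_∞ Toda Hamiltonian −(1/2) Σ_{i∈ℤ} ∂²/∂u_i² + Σ_{i∈ℤ} g_i e^{u_{i+1} − u_i}: dividing H(x)Q − H(y)Q by Q and multiplying by −2 yields exactly the displayed identity, since ∂F/∂x_i = e^{x_i − y_i} − g_i e^{y_{i+1} − x_i} and ∂F/∂y_i = −e^{x_i − y_i} + g_{i−1} e^{y_i − x_{i−1}} for F the exponent of Q. -/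
/-!
Put `a i = e^{x_i - y_i}` and `b i = g_i e^{y_{i+1} - x_i}`. Then `a i * b i = g_i e^{y_{i+1} - y_i}` and
`a (i+1) * b i = g_i e^{x_{i+1} - x_i}`, and since `(u - v)² + u + v + 2uv = (u² + u) + (v² + v)`, both
sides of the identity become `Σ (a i² + a i) + Σ (b i² + b i)` minus the same correction; passing from
one side to the other only shifts the index of `b` by one, which does not change a sum over `ℤ`.
-/

open Real

section TsumSquares

variable {ι R : Type*} [CommRing R] [TopologicalSpace R] [IsTopologicalRing R] [T2Space R]

theorem tsum_sub_sq_add_add_add_two_mul {a b : ι → R} (ha : Summable a) (hb : Summable b)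
    (ha2 : Summable fun i => a i ^ 2) (hb2 : Summable fun i => b i ^ 2)
    (hab : Summable fun i => a i * b i) :
    ∑' i, ((a i - b i) ^ 2 + a i + b i) + 2 * ∑' i, a i * b i
      = ∑' i, (a i ^ 2 + a i) + ∑' i, (b i ^ 2 + b i) := by
  have hsplit : ∀ i, (a i - b i) ^ 2 + a i + b i
      = (a i ^ 2 + a i) + (b i ^ 2 + b i) - 2 * (a i * b i) := fun i => by ring
  rw [tsum_congr hsplit, ((ha2.add ha).add (hb2.add hb)).tsum_sub (hab.mul_left 2),
    (ha2.add ha).tsum_add (hb2.add hb), hab.tsum_mul_left]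
  ring

theorem tsum_sub_sq_add_add_sub_eq_shift {a b : ℤ → R} (ha : Summable a) (hb : Summable b)
    (ha2 : Summable fun i => a i ^ 2) (hb2 : Summable fun i => b i ^ 2)
    (hab : Summable fun i => a i * b i) (hab' : Summable fun i => a (i + 1) * b i) :
    ∑' i, ((a i - b i) ^ 2 + a i + b i) - 2 * ∑' i, a (i + 1) * b i
      = ∑' i, ((a i - b (i - 1)) ^ 2 + a i + b (i - 1)) - 2 * ∑' i, a i * b i := by
  have shift_summable {f : ℤ → R} (hf : Summable f) : Summable fun i => f (i - 1) :=
    (Equiv.subRight (1 : ℤ)).summable_iff.mpr hf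
  have shift_tsum (f : ℤ → R) : ∑' i, f (i - 1) = ∑' i, f i := (Equiv.subRight (1 : ℤ)).tsum_eq f
  have hab'' : Summable fun i => a i * b (i - 1) := by
    simpa only [sub_add_cancel] using shift_summable hab'
  have hb_sum : ∑' i, (b (i - 1) ^ 2 + b (i - 1)) = ∑' i, (b i ^ 2 + b i) :=
    shift_tsum fun i => b i ^ 2 + b i
  have hab_sum : ∑' i, a i * b (i - 1) = ∑' i, a (i + 1) * b i := by
    simpa only [sub_add_cancel] using shift_tsum fun i => a (i + 1) * b i
  have hsame := tsum_sub_sq_add_add_add_two_mul ha hb ha2 hb2 hab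
  have hshifted := tsum_sub_sq_add_add_add_two_mul ha (shift_summable hb) ha2
    (shift_summable hb2) hab''
  rw [hb_sum, hab_sum] at hshifted
  linear_combination hsame - hshifted

end TsumSquares

theorem exp_sub_mul_exp_sub (u v w : ℝ) : exp (u - v) * exp (v - w) = exp (u - w) := by
  rw [← exp_add, sub_add_sub_cancel]

theorem Ainf_baxter_intertwining_general (g x y : ℤ → ℝ)
    (h1 : Summable fun i : ℤ => Real.exp (x i - y i))
    (h2 : Summable fun i : ℤ => g i * Real.exp (y (i + 1) - x i))
    (h3 : Summable fun i : ℤ => g i * Real.exp (x (i + 1) - x i))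
    (h4 : Summable fun i : ℤ => g i * Real.exp (y (i + 1) - y i))
    (h5 : Summable fun i : ℤ => Real.exp (2 * (x i - y i)))
    (h6 : Summable fun i : ℤ => (g i) ^ 2 * Real.exp (2 * (y (i + 1) - x i))) :
    (∑' i : ℤ, ((Real.exp (x i - y i) - g i * Real.exp (y (i + 1) - x i)) ^ 2
        + Real.exp (x i - y i) + g i * Real.exp (y (i + 1) - x i)))
      - 2 * ∑' i : ℤ, g i * Real.exp (x (i + 1) - x i)
    = (∑' i : ℤ, ((Real.exp (x i - y i) - g (i - 1) * Real.exp (y i - x (i - 1))) ^ 2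
        + Real.exp (x i - y i) + g (i - 1) * Real.exp (y i - x (i - 1))))
      - 2 * ∑' i : ℤ, g i * Real.exp (y (i + 1) - y i) := by
  have hsq (t : ℝ) : exp t ^ 2 = exp (2 * t) := by rw [sq, ← exp_add, two_mul]
  have hab (i : ℤ) : exp (x i - y i) * (g i * exp (y (i + 1) - x i))
      = g i * exp (y (i + 1) - y i) := by
    rw [mul_left_comm, mul_comm (exp _), exp_sub_mul_exp_sub]
  have hab' (i : ℤ) : exp (x (i + 1) - y (i + 1)) * (g i * exp (y (i + 1) - x i))
      = g i * exp (x (i + 1) - x i) := by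
    rw [mul_left_comm, exp_sub_mul_exp_sub]
  have key := tsum_sub_sq_add_add_sub_eq_shift (a := fun i => exp (x i - y i))
    (b := fun i => g i * exp (y (i + 1) - x i)) h1 h2
    (by simpa only [hsq] using h5) (by simpa only [mul_pow, hsq] using h6)
    (by simpa only [hab] using h4) (by simpa only [hab'] using h3)
  simpa only [hab, hab', sub_add_cancel] using key

/-- The `A_∞` Toda chain intertwining identity for the Baxter kernel
`Q(x,y) = exp( Σ_{i∈ℤ} ( e^{x_i − y_i} + g_i e^{y_{i+1} − x_i} ) )`:
dividing `H(x)Q − H(y)Q` by `Q` and multiplying by `−2` yields the displayed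
identity between convergent series. -/
theorem Ainf_baxter_intertwining (g x y : ℤ → ℝ) (hg : ∀ i, 0 ≤ g i)
    (h1 : Summable fun i : ℤ => Real.exp (x i - y i))
    (h2 : Summable fun i : ℤ => g i * Real.exp (y (i + 1) - x i))
    (h3 : Summable fun i : ℤ => g i * Real.exp (x (i + 1) - x i))
    (h4 : Summable fun i : ℤ => g i * Real.exp (y (i + 1) - y i))
    (h5 : Summable fun i : ℤ => Real.exp (2 * (x i - y i)))
    (h6 : Summable fun i : ℤ => (g i) ^ 2 * Real.exp (2 * (y (i + 1) - x i))) :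
    (∑' i : ℤ, ((Real.exp (x i - y i) - g i * Real.exp (y (i + 1) - x i)) ^ 2
        + Real.exp (x i - y i) + g i * Real.exp (y (i + 1) - x i)))
      - 2 * ∑' i : ℤ, g i * Real.exp (x (i + 1) - x i)
    = (∑' i : ℤ, ((Real.exp (x i - y i) - g (i - 1) * Real.exp (y i - x (i - 1))) ^ 2
        + Real.exp (x i - y i) + g (i - 1) * Real.exp (y i - x (i - 1))))
      - 2 * ∑' i : ℤ, g i * Real.exp (y (i + 1) - y i) :=
  Ainf_baxter_intertwining_general g x y h1 h2 h3 h4 h5 h6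
end

section
/- Let g : ℕ → ℝ with g_i ≥ 0 (indices i ≥ 1), and let x, z : ℕ → ℝ (coordinates x_1, x_2, … and z_1, z_2, …). Assume the families indexed by i ≥ 1: (e^{x_i − z_i}), (g_{i+1} e^{z_{i+1} − x_i}), (g_{i+1} e^{x_{i+1} − x_i}), (g_{i+1} e^{z_{i+1} − z_i}), (e^{2(x_i − z_i)}), (g_{i+1}² e^{2(z_{i+1} − x_i)}) are summable. Then, with F = g_1 e^{z_1} + Σ_{i≥1} ( e^{x_i − z_i} + g_{i+1} e^{z_{i+1} − x_i} ) and Q = exp F, the pointwise identity −(1/2) Σ_{i≥1} [ (∂F/∂x_i)² + e^{x_i − z_i} + g_{i+1} e^{z_{i+1} − x_i} ] Q + [ g_1 e^{x_1} + Σ_{i≥1} g_{i+1} e^{x_{i+1} − x_i} ] Q = −(1/2) ( [ (∂F/∂z_1)² + g_1 e^{z_1} + e^{x_1 − z_1} ] + Σ_{i≥2} [ (∂F/∂z_i)² + e^{x_i − z_i} + g_i e^{z_i − x_{i−1}} ] ) Q + [ (g_1/2)( e^{z_1} + g_1 e^{2 z_1} ) + Σ_{i≥1} g_{i+1} e^{z_{i+1}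 − z_i} ] Q holds, where ∂F/∂x_i = e^{x_i − z_i} − g_{i+1} e^{z_{i+1} − x_i}, ∂F/∂z_1 = g_1 e^{z_1} − e^{x_1 − z_1}, and ∂F/∂z_i = g_i e^{z_i − x_{i−1}} − e^{x_i − z_i} for i ≥ 2. This expresses that the kernel Q intertwines the B_∞ and BC_∞ Toda chain Hamiltonians: H^{B_∞}(x)Q = H^{BC_∞}(z)Q. -/
open Real

lemma toda_aux (A B C D : ℕ → ℝ) (K : ℝ)
    (hA : Summable A) (hB : Summable B) (hC : Summable C) (hD : Summable D)
    (hA2 : Summable (fun i => A i ^ 2)) (hB2 : Summable (fun i => B i ^ 2))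
    (hAB : ∀ i, A i * B i = C i) (hA'B : ∀ i, A (i + 1) * B i = D i) :
    -(1/2) * (∑' i : ℕ, ((A i - B i) ^ 2 + A i + B i)) + (K * A 0 + ∑' i : ℕ, D i)
    = -(1/2) * (((K - A 0) ^ 2 + K + A 0)
        + ∑' i : ℕ, ((B i - A (i + 1)) ^ 2 + A (i + 1) + B i))
      + ((K + K ^ 2) / 2 + ∑' i : ℕ, C i) := by
  have hA' : Summable (fun i => A (i + 1)) := (summable_nat_add_iff 1).mpr hA
  have hA2' : Summable (fun i => A (i + 1) ^ 2) := (summable_nat_add_iff 1).mpr hA2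
  have e1 : ∑' i : ℕ, ((A i - B i) ^ 2 + A i + B i)
      = ((∑' i : ℕ, A i ^ 2) + ((∑' i : ℕ, B i ^ 2) + ((∑' i : ℕ, A i) + ∑' i : ℕ, B i)))
        - 2 * ∑' i : ℕ, C i := by
    have hpt : ∀ i, (A i - B i) ^ 2 + A i + B i
        = (A i ^ 2 + (B i ^ 2 + (A i + B i))) - 2 * C i := by
      intro i; rw [← hAB i]; ring
    rw [tsum_congr hpt,
        Summable.tsum_sub (hA2.add (hB2.add (hA.add hB))) (hC.mul_left 2),
        Summable.tsum_add hA2 (hB2.add (hA.add hB)), Summable.tsum_add hB2 (hA.add hB), Summable.tsum_add hA hB,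
        tsum_mul_left]
  have e2 : ∑' i : ℕ, ((B i - A (i + 1)) ^ 2 + A (i + 1) + B i)
      = ((∑' i : ℕ, A (i + 1) ^ 2) + ((∑' i : ℕ, B i ^ 2)
          + ((∑' i : ℕ, A (i + 1)) + ∑' i : ℕ, B i)))
        - 2 * ∑' i : ℕ, D i := by
    have hpt : ∀ i, (B i - A (i + 1)) ^ 2 + A (i + 1) + B i
        = (A (i + 1) ^ 2 + (B i ^ 2 + (A (i + 1) + B i))) - 2 * D i := by
      intro i; rw [← hA'B i]; ring
    rw [tsum_congr hpt,
        Summable.tsum_sub (hA2'.add (hB2.add (hA'.add hB))) (hD.mul_left 2),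
        Summable.tsum_add hA2' (hB2.add (hA'.add hB)), Summable.tsum_add hB2 (hA'.add hB), Summable.tsum_add hA' hB,
        tsum_mul_left]
  have e3 : ∑' i : ℕ, A i ^ 2 = A 0 ^ 2 + ∑' i : ℕ, A (i + 1) ^ 2 := Summable.tsum_eq_zero_add hA2
  have e4 : ∑' i : ℕ, A i = A 0 + ∑' i : ℕ, A (i + 1) := Summable.tsum_eq_zero_add hA
  rw [e1, e2, e3, e4]
  ring

/-- Exponent of the kernel intertwining the `B_∞` and `BC_∞` Toda chains:
`F = g_1 e^{z_1} + Σ_{i≥1} ( e^{x_i − z_i} + g_{i+1} e^{z_{i+1} − x_i} )`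
(indices are 0-based in Lean: math index `i ≥ 1` is Lean index `i − 1`). -/
noncomputable def Fexp (g x z : ℕ → ℝ) : ℝ :=
  g 0 * Real.exp (z 0)
    + ∑' i : ℕ, (Real.exp (x i - z i) + g (i + 1) * Real.exp (z (i + 1) - x i))

/-- The kernel `Q = exp F` intertwines the `B_∞` and `BC_∞` Toda chain
Hamiltonians: `H^{B_∞}(x) Q = H^{BC_∞}(z) Q`, written out using
`∂²Q/∂u² = ((∂F/∂u)² + ∂²F/∂u²) Q` and the explicit partial derivatives
`∂F/∂x_i = e^{x_i−z_i} − g_{i+1} e^{z_{i+1}−x_i}`,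
`∂F/∂z_1 = g_1 e^{z_1} − e^{x_1−z_1}`,
`∂F/∂z_i = g_i e^{z_i−x_{i−1}} − e^{x_i−z_i}` for `i ≥ 2`. -/
theorem Binf_BCinf_intertwining (g x z : ℕ → ℝ) (hg : ∀ i, 0 ≤ g i)
    (h1 : Summable fun i : ℕ => Real.exp (x i - z i))
    (h2 : Summable fun i : ℕ => g (i + 1) * Real.exp (z (i + 1) - x i))
    (h3 : Summable fun i : ℕ => g (i + 1) * Real.exp (x (i + 1) - x i))
    (h4 : Summable fun i : ℕ => g (i + 1) * Real.exp (z (i + 1) - z i))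
    (h5 : Summable fun i : ℕ => Real.exp (2 * (x i - z i)))
    (h6 : Summable fun i : ℕ => (g (i + 1)) ^ 2 * Real.exp (2 * (z (i + 1) - x i))) :
    -(1/2) * (∑' i : ℕ,
        ((Real.exp (x i - z i) - g (i + 1) * Real.exp (z (i + 1) - x i)) ^ 2
          + Real.exp (x i - z i) + g (i + 1) * Real.exp (z (i + 1) - x i)))
        * Real.exp (Fexp g x z)
      + (g 0 * Real.exp (x 0) + ∑' i : ℕ, g (i + 1) * Real.exp (x (i + 1) - x i))
        * Real.exp (Fexp g x z)
    = -(1/2) * (((g 0 * Real.exp (z 0) - Real.exp (x 0 - z 0)) ^ 2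
          + g 0 * Real.exp (z 0) + Real.exp (x 0 - z 0))
        + ∑' i : ℕ,
          ((g (i + 1) * Real.exp (z (i + 1) - x i)
              - Real.exp (x (i + 1) - z (i + 1))) ^ 2
            + Real.exp (x (i + 1) - z (i + 1))
            + g (i + 1) * Real.exp (z (i + 1) - x i)))
        * Real.exp (Fexp g x z)
      + ((g 0 / 2) * (Real.exp (z 0) + g 0 * Real.exp (2 * z 0))
          + ∑' i : ℕ, g (i + 1) * Real.exp (z (i + 1) - z i))
        * Real.exp (Fexp g x z) := by
  have hx2 : ∀ t : ℝ, Real.exp (2 * t) = Real.exp t ^ 2 := fun t => by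
    rw [two_mul, Real.exp_add, sq]
  have hA2 : Summable (fun i : ℕ => Real.exp (x i - z i) ^ 2) := by
    simpa [hx2] using h5
  have hB2 : Summable (fun i : ℕ => (g (i + 1) * Real.exp (z (i + 1) - x i)) ^ 2) := by
    simpa [mul_pow, hx2] using h6
  have hAB : ∀ i : ℕ, Real.exp (x i - z i) * (g (i + 1) * Real.exp (z (i + 1) - x i))
      = g (i + 1) * Real.exp (z (i + 1) - z i) := by
    intro i
    rw [mul_comm, mul_assoc, ← Real.exp_add,
      show z (i + 1) - x i + (x i - z i) = z (i + 1) - z i from by ring]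
  have hA'B : ∀ i : ℕ,
      Real.exp (x (i + 1) - z (i + 1)) * (g (i + 1) * Real.exp (z (i + 1) - x i))
      = g (i + 1) * Real.exp (x (i + 1) - x i) := by
    intro i
    rw [mul_comm, mul_assoc, ← Real.exp_add,
      show z (i + 1) - x i + (x (i + 1) - z (i + 1)) = x (i + 1) - x i from by ring]
  have hx0 : g 0 * Real.exp (z 0) * Real.exp (x 0 - z 0) = g 0 * Real.exp (x 0) := by
    rw [mul_assoc, ← Real.exp_add, show z 0 + (x 0 - z 0) = x 0 from by ring]
  have hz2 : (g 0 / 2) * (Real.exp (z 0) + g 0 * Real.exp (2 * z 0))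
      = (g 0 * Real.exp (z 0) + (g 0 * Real.exp (z 0)) ^ 2) / 2 := by
    rw [hx2 (z 0)]; ring
  rw [← hx0, hz2, ← add_mul, ← add_mul]
  congr 1
  exact toda_aux (fun i => Real.exp (x i - z i))
    (fun i => g (i + 1) * Real.exp (z (i + 1) - x i))
    (fun i => g (i + 1) * Real.exp (z (i + 1) - z i))
    (fun i => g (i + 1) * Real.exp (x (i + 1) - x i))
    (g 0 * Real.exp (z 0)) h1 h2 h4 h3 hA2 hB2 hAB hA'B
end
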